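/- arXiv:2206.10276 — 3 statements merged into one kernel-verified Lean document; each statement's English description precedes it below -/
import Mathlib

section
/- Let R be a Q-algebra, a ∈ R, M an R-module, and φ : M → M an R-linear endomorphism. Set φ_n = ∏_{i=0}^{n-1}(φ − i a). Then in the divided power sense, for every x ∈ M and every n ≥ 0, the identity φ_n(x) = Σ_{l,m ≥ 0} φ_l(φ_{m+n}(x)) (1+aX)^{−m−n} (−1)^m C(l+m, l) X^{l+m}/(l+m)! holds as an identity of formal power series in M[[X]] (whenever the double series is interpreted coefficientwise; in particular all coefficients of positive powers of X on the right-hand side vanish after subtracting φ_n(x)). -/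
open Finset

section CommPart
variable {A : Type*} [CommRing A] (a : A)

/-- generalized falling factorial `∏_{i<n} (v - i a)` -/
def pf (v : A) (n : ℕ) : A := ∏ i ∈ Finset.range n, (v - (i : A) * a)

lemma pf_zero (v : A) : pf a v 0 = 1 := by simp [pf]

lemma pf_succ (v : A) (n : ℕ) : pf a v (n + 1) = pf a v n * (v - (n : A) * a) := by
  simp [pf, Finset.prod_range_succ]

/-- Vandermonde convolution for generalized falling factorials. -/
lemma pf_vandermonde (v w : A) (k : ℕ) :
    ∑ m ∈ range (k + 1), (k.choose m : A) * (pf a v m * pf a w (k - m)) =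
      ∏ i ∈ range k, (v + w - (i : A) * a) := by
  induction k with
  | zero => simp [pf]
  | succ k ih =>
    rw [prod_range_succ, ← ih, sum_mul]
    have hsplit : ∀ m ∈ range (k + 1),
        (k.choose m : A) * (pf a v m * pf a w (k - m)) * (v + w - (k : A) * a)
          = (k.choose m : A) * (pf a v (m + 1) * pf a w (k - m))
            + (k.choose m : A) * (pf a v m * pf a w (k - m + 1)) := by
      intro m hm
      rw [mem_range] at hm
      have hmk : m ≤ k := Nat.lt_succ_iff.mp hm
      have hcast : ((k - m : ℕ) : A) = (k : A) - (m : A) := by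
        push_cast [Nat.cast_sub hmk]; ring
      rw [pf_succ, pf_succ, hcast]
      ring
    rw [sum_congr rfl hsplit, sum_add_distrib]
    -- now reorganize into the (k+1) sum
    rw [sum_range_succ' (fun m => ((k+1).choose m : A) * (pf a v m * pf a w (k + 1 - m))) (k+1)]
    have h1 : ∑ m ∈ range (k + 1), (k.choose m : A) * (pf a v m * pf a w (k - m + 1))
        = (∑ m ∈ range k, (k.choose (m+1) : A) * (pf a v (m+1) * pf a w (k - m)))
          + pf a w (k + 1) := by
      rw [sum_range_succ' (fun m => (k.choose m : A) * (pf a v m * pf a w (k - m + 1))) k]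
      simp only [Nat.choose_zero_right, Nat.cast_one, pf_zero, one_mul, Nat.sub_zero]
      congr 1
      refine sum_congr rfl fun m hm => ?_
      rw [mem_range] at hm
      have : k - (m + 1) + 1 = k - m := by omega
      rw [this]
    rw [h1]
    have h3 : ∀ m ∈ range (k + 1),
        ((k+1).choose (m+1) : A) * (pf a v (m+1) * pf a w (k + 1 - (m+1)))
          = (k.choose m : A) * (pf a v (m+1) * pf a w (k - m))
            + (k.choose (m+1) : A) * (pf a v (m+1) * pf a w (k - m)) := by
      intro m hm
      have : k + 1 - (m + 1) = k - m := by omega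
      rw [this, Nat.choose_succ_succ]
      push_cast
      ring
    rw [sum_congr rfl h3, sum_add_distrib]
    have h4 : ∑ m ∈ range (k + 1), (k.choose (m+1) : A) * (pf a v (m+1) * pf a w (k - m))
        = ∑ m ∈ range k, (k.choose (m+1) : A) * (pf a v (m+1) * pf a w (k - m)) := by
      rw [sum_range_succ]
      simp
    have h5 : ∑ m ∈ range (k + 1), (k.choose m : A) * (pf a v (m + 1) * pf a w (k - m))
        = ∑ m ∈ range k, (k.choose m : A) * (pf a v (m+1) * pf a w (k - m))
          + pf a v (k + 1) := by
      rw [sum_range_succ]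
      simp [pf_zero]
    rw [h4, h5]
    simp [pf_zero]
    ring

lemma pf_shift (u : A) (n m : ℕ) :
    pf a u (m + n) = pf a u n * pf a (u - (n : A) * a) m := by
  induction m with
  | zero => simp [pf]
  | succ m ih =>
    have : m + 1 + n = (m + n) + 1 := by omega
    rw [this, pf_succ, ih, pf_succ]
    push_cast
    ring

lemma prod_cast_sub_eq_descFactorial (N t : ℕ) :
    ∏ i ∈ range t, ((N : A) - (i : A)) = (N.descFactorial t : A) := by
  induction t with
  | zero => simp
  | succ t ih =>
    rw [prod_range_succ, ih, Nat.descFactorial_succ]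
    rcases le_or_gt t N with h | h
    · rw [Nat.cast_mul, Nat.cast_sub h]
      ring
    · rw [Nat.descFactorial_eq_zero_iff_lt.mpr h]
      simp

lemma pf_nat_mul (N t : ℕ) :
    pf a ((N : A) * a) t = (N.descFactorial t : A) * a ^ t := by
  unfold pf
  calc ∏ i ∈ range t, ((N : A) * a - (i : A) * a)
      = ∏ i ∈ range t, (((N : A) - (i : A)) * a) := by
        refine prod_congr rfl fun i _ => by ring
    _ = (∏ i ∈ range t, ((N : A) - (i : A))) * a ^ t := by
        rw [prod_mul_distrib, prod_const, card_range]
    _ = (N.descFactorial t : A) * a ^ t := by rw [prod_cast_sub_eq_descFactorial]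

/-- Key inner identity (integer-coefficient form). -/
lemma pf_main_inner (u : A) (n k : ℕ) :
    ∑ m ∈ range (k + 1),
      ((k.choose m * (n + k - 1).descFactorial (k - m) : ℕ) : A)
        * (a ^ (k - m) * pf a u (m + n))
      = pf a u n * ∏ i ∈ range k, (u + (i : A) * a) := by
  have key : ∀ m ∈ range (k + 1),
      ((k.choose m * (n + k - 1).descFactorial (k - m) : ℕ) : A)
          * (a ^ (k - m) * pf a u (m + n))
        = pf a u n * ((k.choose m : A)
            * (pf a (u - (n : A) * a) m * pf a (((n + k - 1 : ℕ) : A) * a) (k - m))) := by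
    intro m hm
    rw [pf_shift a u n m, pf_nat_mul]
    push_cast
    ring
  rw [sum_congr rfl key, ← mul_sum, pf_vandermonde]
  congr 1
  rw [← prod_range_reflect (fun i => (u + (i : A) * a)) k]
  refine prod_congr rfl fun i hi => ?_
  rw [mem_range] at hi
  have h1 : ((k - 1 - i : ℕ) : A) = ((n + k - 1 : ℕ) : A) - (n : A) - (i : A) := by
    have hn : (n + k - 1 : ℕ) = (k - 1 - i) + (n + i) := by omega
    rw [hn]
    push_cast
    ring
  rw [h1]
  ring

lemma pf_neg_eq (u : A) (k : ℕ) :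
    pf a (-u) k = (-1 : A) ^ k * ∏ i ∈ range k, (u + (i : A) * a) := by
  induction k with
  | zero => simp [pf]
  | succ k ih =>
    rw [pf_succ, prod_range_succ, ih]
    ring

end CommPart

section MainComm
variable {A : Type*} [CommRing A] [Algebra ℚ A] (a : A)

lemma pf_inner_q (u : A) (n l k : ℕ) :
    ∑ m ∈ range (k + 1),
      algebraMap ℚ A ((-1 : ℚ) ^ ((k - m) + m) * ((m + n + (k - m) - 1).choose (k - m) : ℚ)
          * ((l + m).choose l : ℚ) / ((l + m).factorial : ℚ))
        * (a ^ (k - m) * (pf a u l * pf a u (m + n)))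
    = algebraMap ℚ A ((-1 : ℚ) ^ k / ((l + k).factorial : ℚ)) * ((l + k).choose l : A)
        * pf a u l * (pf a u n * ∏ i ∈ range k, (u + (i : A) * a)) := by
  have hterm : ∀ m ∈ range (k + 1),
      algebraMap ℚ A ((-1 : ℚ) ^ ((k - m) + m) * ((m + n + (k - m) - 1).choose (k - m) : ℚ)
          * ((l + m).choose l : ℚ) / ((l + m).factorial : ℚ))
        * (a ^ (k - m) * (pf a u l * pf a u (m + n)))
      = algebraMap ℚ A ((-1 : ℚ) ^ k / ((l + k).factorial : ℚ)) * ((l + k).choose l : A)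
          * pf a u l
          * (((k.choose m * (n + k - 1).descFactorial (k - m) : ℕ) : A)
              * (a ^ (k - m) * pf a u (m + n))) := by
    intro m hm
    rw [mem_range, Nat.lt_succ_iff] at hm
    obtain ⟨t, rfl⟩ := Nat.exists_eq_add_of_le hm
    have h1 : m + t - m = t := by omega
    have h2 : m + n + t - 1 = n + (m + t) - 1 := by omega
    rw [h1, h2]
    have hC1 : (((l + (m + t)).choose l : ℕ) : A)
        = algebraMap ℚ A (((l + (m + t)).choose l : ℕ) : ℚ) := (map_natCast _ _).symm
    have hC2 : (((m + t).choose m * (n + (m + t) - 1).descFactorial t : ℕ) : A)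
        = algebraMap ℚ A ((((m + t).choose m * (n + (m + t) - 1).descFactorial t : ℕ)) : ℚ) :=
      (map_natCast _ _).symm
    rw [hC1, hC2]
    have hq : (-1 : ℚ) ^ (t + m) * ((n + (m + t) - 1).choose t : ℚ)
          * ((l + m).choose l : ℚ) / ((l + m).factorial : ℚ)
        = ((-1 : ℚ) ^ (m + t) / ((l + (m + t)).factorial : ℚ))
            * (((l + (m + t)).choose l : ℕ) : ℚ)
            * ((((m + t).choose m * (n + (m + t) - 1).descFactorial t : ℕ)) : ℚ) := by
      push_cast
      rw [Nat.descFactorial_eq_factorial_mul_choose]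
      rw [Nat.cast_choose ℚ (Nat.le_add_right l m),
        Nat.cast_choose ℚ (Nat.le_add_right l (m + t)),
        Nat.cast_choose ℚ (Nat.le_add_right m t)]
      have e1 : l + m - l = m := by omega
      have e2 : l + (m + t) - l = m + t := by omega
      have e3 : m + t - m = t := by omega
      rw [e1, e2, e3]
      push_cast
      have f1 : ((l.factorial : ℚ)) ≠ 0 := Nat.cast_ne_zero.mpr (Nat.factorial_ne_zero l)
      have f2 : ((m.factorial : ℚ)) ≠ 0 := Nat.cast_ne_zero.mpr (Nat.factorial_ne_zero m)
      have f3 : ((t.factorial : ℚ)) ≠ 0 := Nat.cast_ne_zero.mpr (Nat.factorial_ne_zero t)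
      have f4 : (((l + m).factorial : ℚ)) ≠ 0 := Nat.cast_ne_zero.mpr (Nat.factorial_ne_zero _)
      have f5 : (((l + (m + t)).factorial : ℚ)) ≠ 0 := Nat.cast_ne_zero.mpr (Nat.factorial_ne_zero _)
      have f6 : (((m + t).factorial : ℚ)) ≠ 0 := Nat.cast_ne_zero.mpr (Nat.factorial_ne_zero _)
      field_simp
      ring
    rw [hq, map_mul, map_mul]
    ring
  rw [sum_congr rfl hterm, ← mul_sum, pf_main_inner]

lemma pf_main (u : A) (n j : ℕ) :
    ∑ s ∈ range (j + 1), ∑ l ∈ range (s + 1),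
      algebraMap ℚ A ((-1 : ℚ) ^ ((j - s) + (s - l)) *
          (((s - l) + n + (j - s) - 1).choose (j - s) : ℚ) * (s.choose l : ℚ) / (s.factorial : ℚ))
        * (a ^ (j - s) * (pf a u l * pf a u ((s - l) + n)))
      = if j = 0 then pf a u n else 0 := by
  rw [Finset.sum_comm' (t' := range (j + 1)) (s' := fun l => Ico l (j + 1)) (by
    intro x y
    simp only [mem_range, mem_Ico]
    omega)]
  have hout : ∀ l ∈ range (j + 1),
      (∑ s ∈ Ico l (j + 1),
        algebraMap ℚ A ((-1 : ℚ) ^ ((j - s) + (s - l)) *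
            (((s - l) + n + (j - s) - 1).choose (j - s) : ℚ) * (s.choose l : ℚ)
              / (s.factorial : ℚ))
          * (a ^ (j - s) * (pf a u l * pf a u ((s - l) + n))))
      = algebraMap ℚ A ((1 : ℚ) / (j.factorial : ℚ)) * (pf a u n
          * ((j.choose l : A) * (pf a u l * pf a (-u) (j - l)))) := by
    intro l hl
    rw [mem_range, Nat.lt_succ_iff] at hl
    obtain ⟨k, rfl⟩ := Nat.exists_eq_add_of_le hl
    rw [Finset.sum_Ico_eq_sum_range]
    have hb : l + k + 1 - l = k + 1 := by omega
    rw [hb]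
    have hmatch : ∀ m ∈ range (k + 1),
        algebraMap ℚ A ((-1 : ℚ) ^ ((l + k - (l + m)) + ((l + m) - l)) *
            ((((l + m) - l) + n + (l + k - (l + m)) - 1).choose (l + k - (l + m)) : ℚ)
              * ((l + m).choose l : ℚ) / ((l + m).factorial : ℚ))
          * (a ^ (l + k - (l + m)) * (pf a u l * pf a u (((l + m) - l) + n)))
        = algebraMap ℚ A ((-1 : ℚ) ^ ((k - m) + m) * ((m + n + (k - m) - 1).choose (k - m) : ℚ)
            * ((l + m).choose l : ℚ) / ((l + m).factorial : ℚ))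
          * (a ^ (k - m) * (pf a u l * pf a u (m + n))) := by
      intro m hm
      rw [mem_range, Nat.lt_succ_iff] at hm
      have g1 : l + k - (l + m) = k - m := by omega
      have g2 : (l + m) - l = m := by omega
      have g3 : m + n + (k - m) - 1 = m + n + (k - m) - 1 := rfl
      rw [g1, g2]
    rw [sum_congr rfl hmatch, pf_inner_q]
    rw [pf_neg_eq]
    have g4 : l + k - l = k := by omega
    rw [g4]
    have hsgn : ((-1 : A) ^ k : A) = algebraMap ℚ A ((-1 : ℚ) ^ k) := by
      rw [map_pow, map_neg, map_one]
    rw [hsgn]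
    rw [show ((-1 : ℚ) ^ k / ((l + k).factorial : ℚ))
        = (1 / ((l + k).factorial : ℚ)) * ((-1 : ℚ) ^ k) by ring, map_mul]
    ring
  rw [sum_congr rfl hout, ← mul_sum]
  have hv : ∑ l ∈ range (j + 1), pf a u n * ((j.choose l : A) * (pf a u l * pf a (-u) (j - l)))
      = pf a u n * ∑ l ∈ range (j + 1), (j.choose l : A) * (pf a u l * pf a (-u) (j - l)) := by
    rw [mul_sum]
  rw [hv, pf_vandermonde]
  rcases Nat.eq_zero_or_pos j with hj | hj
  · subst hj
    simp
  · rw [if_neg (Nat.pos_iff_ne_zero.mp hj)]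
    have hz : ∏ i ∈ range j, (u + -u - (i : A) * a) = 0 := by
      apply Finset.prod_eq_zero (Finset.mem_range.mpr hj)
      simp
    rw [hz, mul_zero, mul_zero]

end MainComm

/-- The key recurrence relation (direction (2) ⇒ (1) of the technical lemma on stratifications),
stated coefficientwise in `M[[X]]`: with `φ_n = ∏_{i=0}^{n-1}(φ - i a)`, for every `x ∈ M`,
`n ≥ 0` and every degree `j ≥ 0`, the `X^j`-coefficient of
`∑_{l,m≥0} φ_l(φ_{m+n}(x)) (1+aX)^{-m-n} (-1)^m C(l+m,l) X^{[l+m]}` equals the `X^j`-coefficient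
of `φ_n(x)`.  (Writing `s = l + m`, `t = j - s`, the `X^j`-coefficient of the right-hand side is
the finite sum over `s ≤ j`, `l ≤ s` of
`(-1)^{t+m} C(m+n+t-1, t) a^t · C(s,l)/s! · φ_l(φ_{m+n}(x))` with `m = s - l`.) -/
theorem stmt_5 (R : Type*) [CommRing R] [Algebra ℚ R] (a : R)
    (M : Type*) [AddCommGroup M] [Module R M] (φ : Module.End R M) :
    let Φ : ℕ → Module.End R M := fun n =>
      ((List.range n).map fun i : ℕ => φ - (((i : R)) * a) • (1 : Module.End R M)).prod
    ∀ (x : M) (n j : ℕ),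
      (∑ s ∈ Finset.range (j + 1), ∑ l ∈ Finset.range (s + 1),
        (algebraMap ℚ R
            ((-1 : ℚ) ^ ((j - s) + (s - l)) *
              (Nat.choose ((s - l) + n + (j - s) - 1) (j - s) : ℚ) *
              (Nat.choose s l : ℚ) / (Nat.factorial s : ℚ))) •
          (a ^ (j - s) • (Φ l (Φ ((s - l) + n) x)))) =
      (if j = 0 then Φ n x else 0) := by
  intro Φ x n j
  have hΦ : ∀ m : ℕ,
      Φ m = Polynomial.aeval φ (pf (Polynomial.C a) Polynomial.X m) := by
    intro m
    induction m with
    | zero => simp [Φ, pf]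
    | succ m ih =>
      show ((List.range (m+1)).map fun i : ℕ =>
          φ - (((i : R)) * a) • (1 : Module.End R M)).prod = _
      rw [List.prod_range_succ]
      rw [show ((List.range m).map fun i : ℕ =>
          φ - (((i : R)) * a) • (1 : Module.End R M)).prod = Φ m from rfl, ih]
      rw [pf_succ, map_mul]
      congr 1
      rw [map_sub, Polynomial.aeval_X, ← Polynomial.C_eq_natCast, ← Polynomial.C_mul,
        Polynomial.aeval_C, Module.algebraMap_end_eq_smul_id]
      rfl
  have hterm : ∀ (c : ℚ) (t l q : ℕ),
      (algebraMap ℚ R c) • (a ^ t • (Φ l (Φ q x)))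
        = (Polynomial.aeval φ (algebraMap ℚ (Polynomial R) c *
            ((Polynomial.C a) ^ t *
              (pf (Polynomial.C a) Polynomial.X l * pf (Polynomial.C a) Polynomial.X q)))) x := by
    intro c t l q
    rw [hΦ l, hΦ q]
    rw [Polynomial.algebraMap_apply]
    simp only [map_mul, map_pow, Polynomial.aeval_C]
    rw [← map_pow (algebraMap R (Module.End R M)) a t]
    simp only [Module.End.mul_apply, Module.algebraMap_end_apply]
  have key := congrArg (fun p : Polynomial R => (Polynomial.aeval φ p) x)
    (pf_main (A := Polynomial R) (Polynomial.C a) (Polynomial.X) n j)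
  simp only [map_sum, LinearMap.sum_apply, apply_ite (fun p : Polynomial R =>
    (Polynomial.aeval φ p) x), map_zero, LinearMap.zero_apply] at key
  calc (∑ s ∈ Finset.range (j + 1), ∑ l ∈ Finset.range (s + 1),
        (algebraMap ℚ R
            ((-1 : ℚ) ^ ((j - s) + (s - l)) *
              (Nat.choose ((s - l) + n + (j - s) - 1) (j - s) : ℚ) *
              (Nat.choose s l : ℚ) / (Nat.factorial s : ℚ))) •
          (a ^ (j - s) • (Φ l (Φ ((s - l) + n) x))))
      = ∑ s ∈ Finset.range (j + 1), ∑ l ∈ Finset.range (s + 1),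
          (Polynomial.aeval φ (algebraMap ℚ (Polynomial R)
              ((-1 : ℚ) ^ ((j - s) + (s - l)) *
                (Nat.choose ((s - l) + n + (j - s) - 1) (j - s) : ℚ) *
                (Nat.choose s l : ℚ) / (Nat.factorial s : ℚ)) *
            ((Polynomial.C a) ^ (j - s) *
              (pf (Polynomial.C a) Polynomial.X l *
                pf (Polynomial.C a) Polynomial.X ((s - l) + n))))) x := by
        refine Finset.sum_congr rfl fun s _ => Finset.sum_congr rfl fun l _ => ?_
        exact hterm _ _ _ _
    _ = if j = 0 then Φ n x else 0 := by
        rw [key]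
        rcases eq_or_ne j 0 with h | h <;> simp [h, hΦ n]
end

section
/- Let R be a Q-algebra, a ∈ R, and let φ : M → M be R-linear on an R-module M. Define φ_n = ∏_{i=0}^{n-1}(φ − ia). Then for all n ≥ 0, the formal identity (1+aX)^{φ/a} := Σ_{n≥0} φ_n · X^n/n! satisfies the composition law: applying the operator-valued series at X and then at Y (with the twisted substitution arising from the cosimplicial face maps) reproduces the series at X+Y+aXY; equivalently, for the formal group law F(X,Y) = X + Y + aXY, one has Σ_n φ_n F(X,Y)^{[n]} = (Σ_n φ_n X^{[n]})·(Σ_n φ_n Y^{[n]}) as operator-valued formal power series in two variables X, Y, provided all φ_i commute. -/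
/-- Multiplicativity of the formal binomial series `(1+aX)^{φ/a} = ∑ φ_n X^{[n]}` with respect
to the formal group law `F(X,Y) = X + Y + aXY`: with `φ_n = ∏_{i=0}^{n-1}(φ - i a)` (which all
commute), the identity `∑_n φ_n F(X,Y)^{[n]} = (∑_n φ_n X^{[n]})·(∑_n φ_n Y^{[n]})` holds as
operator-valued formal power series in two variables.  Coefficientwise (in `X^p Y^q`):
`∑_{k=0}^{min(p,q)} a^k φ_{p+q-k} / ((p-k)!(q-k)!k!) = (φ_p ∘ φ_q)/(p! q!)`. -/
theorem stmt_12 (R : Type*) [CommRing R] [Algebra ℚ R] (a : R)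
    (M : Type*) [AddCommGroup M] [Module R M] (φ : Module.End R M) :
    let Φ : ℕ → Module.End R M := fun n =>
      ((List.range n).map fun i : ℕ => φ - (((i : R)) * a) • (1 : Module.End R M)).prod
    ∀ p q : ℕ,
      (∑ k ∈ Finset.range (min p q + 1),
        (algebraMap ℚ R (1 / ((Nat.factorial (p - k) : ℚ) * (Nat.factorial (q - k) : ℚ) *
            (Nat.factorial k : ℚ)))) • (a ^ k • Φ (p + q - k))) =
      (algebraMap ℚ R (1 / ((Nat.factorial p : ℚ) * (Nat.factorial q : ℚ)))) • (Φ p * Φ q) := by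
  intro Φ p q
  have hΦ : ∀ n : ℕ, Φ (n + 1) = Φ n * (φ - ((n : R) * a) • 1) := by
    intro n
    simp [Φ, List.range_succ]
  have key : ∀ Q : ℕ, Φ p * Φ Q = ∑ k ∈ Finset.range (Q + 1),
      (((p.choose k * Q.choose k * k.factorial : ℕ) : R) * a ^ k) • Φ (p + Q - k) := by
    intro Q
    induction Q with
    | zero => simp [Φ]
    | succ Q ih =>
      rw [hΦ, ← mul_assoc, ih, Finset.sum_mul]
      have hterm : ∀ k ∈ Finset.range (Q + 1),
          ((((p.choose k * Q.choose k * k.factorial : ℕ) : R) * a ^ k) • Φ (p + Q - k)) *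
            (φ - ((Q : R) * a) • 1)
          = (((p.choose k * Q.choose k * k.factorial : ℕ) : R) * a ^ k) • Φ (p + Q + 1 - k)
            + ((((p.choose k * Q.choose k * k.factorial : ℕ) : R) * a ^ k) * (((p : R) - k) * a)) •
                Φ (p + Q - k) := by
        intro k hk
        have hkQ : k ≤ Q := Nat.lt_succ_iff.mp (Finset.mem_range.mp hk)
        have hsplit : φ - ((Q : R) * a) • (1 : Module.End R M)
            = (φ - (((p + Q - k : ℕ) : R) * a) • (1 : Module.End R M))
              + ((((p : R) - k) * a) • 1) := by
          have hc : ((p + Q - k : ℕ) : R) = (p : R) + Q - k := by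
            have h : k ≤ p + Q := le_trans hkQ (Nat.le_add_left _ _)
            push_cast [h]
            ring
          have h2 : ((Q : R) * a) = (((p + Q - k : ℕ) : R) * a) - (((p : R) - k) * a) := by
            rw [hc]; ring
          rw [h2, sub_smul]
          abel
        rw [smul_mul_assoc, hsplit, mul_add, ← hΦ]
        have he : p + Q - k + 1 = p + Q + 1 - k := by omega
        rw [he, mul_smul_comm, mul_one, smul_add, smul_smul]
      rw [Finset.sum_congr rfl hterm, Finset.sum_add_distrib]
      have hsplitsum : ∑ k ∈ Finset.range (Q + 1 + 1),
            (((p.choose k * (Q + 1).choose k * k.factorial : ℕ) : R) * a ^ k) • Φ (p + (Q + 1) - k)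
          = (∑ k ∈ Finset.range (Q + 2),
              (((p.choose k * Q.choose k * k.factorial : ℕ) : R) * a ^ k) • Φ (p + Q + 1 - k))
            + ∑ k ∈ Finset.range (Q + 2),
              (((if k = 0 then 0 else ((p.choose k * Q.choose (k - 1) * k.factorial : ℕ) : R))) *
                a ^ k) • Φ (p + Q + 1 - k) := by
        rw [← Finset.sum_add_distrib]
        refine Finset.sum_congr rfl fun k hk => ?_
        have hidx : p + (Q + 1) - k = p + Q + 1 - k := by omega
        rw [hidx, ← add_smul, ← add_mul]
        congr 2
        cases k with
        | zero => simp
        | succ j =>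
          simp only [Nat.succ_ne_zero, if_false, Nat.succ_sub_one]
          push_cast [Nat.choose_succ_succ]
          ring
      rw [hsplitsum]
      congr 1
      · -- first sums match: extend range by one, extra term zero
        conv_rhs => rw [Finset.sum_range_succ]
        have h0 : (Q.choose (Q + 1)) = 0 := Nat.choose_eq_zero_of_lt (by omega)
        simp [h0]
      · -- second sums: shift index
        symm
        rw [Finset.sum_range_succ']
        simp only [reduceIte, zero_mul, zero_smul, add_zero]
        refine Finset.sum_congr rfl fun k hk => ?_
        have hidx : p + Q + 1 - (k + 1) = p + Q - k := by omega
        rw [hidx]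
        congr 1
        simp only [Nat.succ_ne_zero, if_false, Nat.succ_sub_one]
        by_cases hkp : k ≤ p
        · have hn : p.choose (k + 1) * (k + 1) = p.choose k * (p - k) := Nat.choose_succ_right_eq p k
          have hn' : ((p.choose (k + 1) : R)) * ((k : R) + 1) = (p.choose k : R) * ((p : R) - k) := by
            have h := congrArg (fun n : ℕ => (n : R)) hn
            push_cast [Nat.cast_sub hkp] at h
            exact h
          push_cast [Nat.factorial_succ]
          linear_combination ((Q.choose k : R) * (k.factorial : R) * a ^ (k+1)) * hn'
        · have h1 : p.choose k = 0 := Nat.choose_eq_zero_of_lt (by omega)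
          have h2 : p.choose (k + 1) = 0 := Nat.choose_eq_zero_of_lt (by omega)
          simp [h1, h2]
  rw [key q, Finset.smul_sum]
  have hco : ∀ k ∈ Finset.range (min p q + 1),
      (algebraMap ℚ R (1 / ((Nat.factorial (p - k) : ℚ) * (Nat.factorial (q - k) : ℚ) *
          (Nat.factorial k : ℚ)))) • (a ^ k • Φ (p + q - k))
      = (algebraMap ℚ R (1 / ((Nat.factorial p : ℚ) * (Nat.factorial q : ℚ)))) •
          ((((p.choose k * q.choose k * k.factorial : ℕ) : R) * a ^ k) • Φ (p + q - k)) := by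
    intro k hk
    have hkm : k ≤ min p q := Nat.lt_succ_iff.mp (Finset.mem_range.mp hk)
    have hkp : k ≤ p := le_trans hkm (min_le_left _ _)
    have hkq : k ≤ q := le_trans hkm (min_le_right _ _)
    rw [smul_smul, smul_smul]
    congr 1
    have hN : (((p.choose k * q.choose k * k.factorial : ℕ)) : R)
        = algebraMap ℚ R ((p.choose k * q.choose k * k.factorial : ℕ) : ℚ) := by
      simp
    rw [hN, ← mul_assoc, ← map_mul]
    congr 2
    have h1 : p.choose k * k.factorial * (p - k).factorial = p.factorial :=
      Nat.choose_mul_factorial_mul_factorial hkp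
    have h2 : q.choose k * k.factorial * (q - k).factorial = q.factorial :=
      Nat.choose_mul_factorial_mul_factorial hkq
    have hNat : p.factorial * q.factorial
        = (p.choose k * q.choose k * k.factorial) * ((p - k).factorial * (q - k).factorial * k.factorial) := by
      rw [← h1, ← h2]; ring
    have hx : ((Nat.factorial (p - k) : ℚ) * (Nat.factorial (q - k) : ℚ) * (Nat.factorial k : ℚ)) ≠ 0 := by
      positivity
    have hy : ((Nat.factorial p : ℚ) * (Nat.factorial q : ℚ)) ≠ 0 := by positivity
    field_simp
    exact_mod_cast hNat.trans (mul_comm _ _)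
  rw [Finset.sum_congr rfl hco]
  refine Finset.sum_subset (Finset.range_subset_range.mpr (by omega)) fun k hk hnk => ?_
  have hpk : p < k := by
    simp only [Finset.mem_range] at hk hnk
    omega
  simp [Nat.choose_eq_zero_of_lt hpk]
end

section
/- Let F ⊂ F' be a field extension and let (M₁,∇₁), (M₂,∇₂) be log-T-connections on finite free F[[T]]-modules. Suppose there exists a basis-wise-F'-linear-combination horizontal isomorphism: i.e., Hom_{∇}(M₁,M₂) ⊗_F F' contains an invertible element, where Hom_∇ denotes F[[T]]-linear maps commuting with the connections. If F is infinite, then there already exists an invertible element in Hom_∇(M₁,M₂) itself; i.e., M₁ ≅ M₂ as log-T-connections over F[[T]]. -/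
/-- Evaluating the determinant polynomial `det (∑ Xᵢ • Bᵢ)` in an algebra. -/
lemma aux_det_eval {F : Type*} [CommRing F] {n d : ℕ}
    (Abar : Fin n → Matrix (Fin d) (Fin d) F)
    (R : Type*) [CommRing R] [Algebra F R] (c : Fin n → R) :
    MvPolynomial.aeval c (Matrix.det (∑ i, (MvPolynomial.X i : MvPolynomial (Fin n) F) •
        ((Abar i).map MvPolynomial.C)))
      = Matrix.det (∑ i, c i • ((Abar i).map (algebraMap F R))) := by
  rw [AlgHom.map_det, map_sum]
  congr 1
  refine Finset.sum_congr rfl fun i _ => ?_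
  ext a b
  simp only [AlgHom.mapMatrix_apply, Matrix.map_apply, Matrix.smul_apply, smul_eq_mul,
    map_mul, MvPolynomial.aeval_X, MvPolynomial.aeval_C]

/-- Specialization of horizontal isomorphisms from a field extension to an infinite base field.
Let `F ⊂ F'` be fields with `F` infinite, `(M₁,∇₁)`, `(M₂,∇₂)` log-`T`-connections on finite
free `F[[T]]`-modules of rank `d`, and `f₁,…,f_n` horizontal `F[[T]]`-linear maps `M₁ → M₂`
(a basis of `Hom_∇(M₁,M₂)`).  If some `F'`-linear combination `∑ λ_i f_i` is invertible
(its matrix, base changed to `F'[[T]]`, has unit determinant), then already some `F`-linear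
combination `∑ μ_i f_i` is a horizontal isomorphism `M₁ ≅ M₂` of log-`T`-connections. -/
theorem stmt_15 (F F' : Type*) [Field F] [Field F'] [Algebra F F'] [Infinite F]
    (d : ℕ)
    (M₁ M₂ : Type*) [AddCommGroup M₁] [AddCommGroup M₂]
    [Module (PowerSeries F) M₁] [Module (PowerSeries F) M₂]
    [Module F M₁] [Module F M₂]
    [IsScalarTower F (PowerSeries F) M₁] [IsScalarTower F (PowerSeries F) M₂]
    [SMulCommClass (PowerSeries F) F M₂]
    (b₁ : Module.Basis (Fin d) (PowerSeries F) M₁) (b₂ : Module.Basis (Fin d) (PowerSeries F) M₂)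
    (nabla1 : M₁ →ₗ[F] M₁) (nabla2 : M₂ →ₗ[F] M₂)
    (hLeib1 : ∀ (f : PowerSeries F) (x : M₁),
      nabla1 (f • x) = f • nabla1 x + (PowerSeries.X * PowerSeries.derivative F f) • x)
    (hLeib2 : ∀ (f : PowerSeries F) (x : M₂),
      nabla2 (f • x) = f • nabla2 x + (PowerSeries.X * PowerSeries.derivative F f) • x)
    (n : ℕ) (f : Fin n → (M₁ →ₗ[PowerSeries F] M₂))
    (hhoriz : ∀ (i : Fin n) (x : M₁), nabla2 (f i x) = f i (nabla1 x))
    (hindep : LinearIndependent F f)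
    (hF' : ∃ lam : Fin n → F',
      IsUnit (Matrix.det (∑ i, lam i •
        ((LinearMap.toMatrix b₁ b₂ (f i)).map (PowerSeries.map (algebraMap F F')))))) :
    ∃ mu : Fin n → F,
      (∀ x : M₁, nabla2 ((∑ i, mu i • f i) x) = (∑ i, mu i • f i) (nabla1 x)) ∧
      Function.Bijective (∑ i, mu i • f i) := by
  classical
  set A : Fin n → Matrix (Fin d) (Fin d) (PowerSeries F) :=
    fun i => LinearMap.toMatrix b₁ b₂ (f i) with hA
  set Abar : Fin n → Matrix (Fin d) (Fin d) F :=
    fun i => (A i).map (PowerSeries.constantCoeff (R := F)) with hAbar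
  -- the polynomial `P = det (∑ Xᵢ • (Abar i))`
  set P : MvPolynomial (Fin n) F :=
    Matrix.det (∑ i, (MvPolynomial.X i : MvPolynomial (Fin n) F) •
      ((Abar i).map MvPolynomial.C)) with hP
  -- `P` is nonzero, by the hypothesis over `F'`
  obtain ⟨lam, hlam⟩ := hF'
  have hPne : P ≠ 0 := by
    intro h0
    have h1 := aux_det_eval Abar F' lam
    rw [← hP] at h1
    have hz : Matrix.det (∑ i, lam i • ((Abar i).map (algebraMap F F'))) = 0 := by
      rw [← h1, h0, map_zero]
    have hcc := (hlam.map (PowerSeries.constantCoeff (R := F'))).ne_zero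
    apply hcc
    rw [RingHom.map_det, RingHom.mapMatrix_apply]
    have hmat : (∑ i, lam i •
          ((A i).map (PowerSeries.map (algebraMap F F')))).map (PowerSeries.constantCoeff (R := F'))
        = ∑ i, lam i • ((Abar i).map (algebraMap F F')) := by
      ext a b
      simp only [Matrix.map_apply, Matrix.sum_apply, Matrix.smul_apply, map_sum]
      refine Finset.sum_congr rfl fun i _ => ?_
      rw [PowerSeries.smul_eq_C_mul, map_mul, PowerSeries.constantCoeff_C, smul_eq_mul,
        ← PowerSeries.coeff_zero_eq_constantCoeff_apply,
        PowerSeries.coeff_map, PowerSeries.coeff_zero_eq_constantCoeff_apply]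
      rfl
    rw [hmat, hz]
  -- since `F` is infinite, find an `F`-point where `P` does not vanish
  have hex : ∃ mu : Fin n → F, MvPolynomial.eval mu P ≠ 0 := by
    by_contra h
    push_neg at h
    exact hPne (MvPolynomial.funext fun x => by rw [h x, map_zero])
  obtain ⟨mu, hmu⟩ := hex
  refine ⟨mu, ?_, ?_⟩
  · -- horizontality of any linear combination
    intro x
    simp only [LinearMap.sum_apply, LinearMap.smul_apply, map_sum, map_smul]
    exact Finset.sum_congr rfl fun i _ => by rw [hhoriz i x]
  · -- bijectivity
    have hsmul : ∀ i : Fin n, mu i • f i = (PowerSeries.C (R := F) (mu i)) • f i := by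
      intro i
      ext x
      rw [LinearMap.smul_apply, LinearMap.smul_apply,
        ← smul_one_smul (PowerSeries F) (mu i) (f i x), PowerSeries.smul_eq_C_mul, mul_one]
    have hmatg : LinearMap.toMatrix b₁ b₂ (∑ i, mu i • f i)
        = ∑ i, (PowerSeries.C (R := F) (mu i)) • A i := by
      rw [map_sum]
      refine Finset.sum_congr rfl fun i _ => ?_
      rw [hsmul i, map_smul, hA]
    have hdetne : PowerSeries.constantCoeff (R := F)
        (Matrix.det (LinearMap.toMatrix b₁ b₂ (∑ i, mu i • f i))) ≠ 0 := by
      rw [hmatg, RingHom.map_det, RingHom.mapMatrix_apply]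
      have hmat2 : (∑ i, (PowerSeries.C (R := F) (mu i)) • A i).map
          (PowerSeries.constantCoeff (R := F)) = ∑ i, mu i • Abar i := by
        ext a b
        simp only [Matrix.map_apply, Matrix.sum_apply, Matrix.smul_apply, map_sum]
        refine Finset.sum_congr rfl fun i _ => ?_
        rw [smul_eq_mul, map_mul, PowerSeries.constantCoeff_C, smul_eq_mul]
        rfl
      rw [hmat2]
      have hth := aux_det_eval Abar F mu
      rw [← hP] at hth
      have hid : ∀ i : Fin n, (Abar i).map (algebraMap F F) = Abar i := by
        intro i
        ext a b
        simp [Matrix.map_apply]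
      simp only [hid] at hth
      rw [← hth]
      exact hmu
    have hdet : IsUnit (Matrix.det (LinearMap.toMatrix b₁ b₂ (∑ i, mu i • f i))) := by
      rw [PowerSeries.isUnit_iff_constantCoeff]
      exact isUnit_iff_ne_zero.mpr hdetne
    have he : (LinearEquiv.ofIsUnitDet hdet : M₁ →ₗ[PowerSeries F] M₂)
        = ∑ i, mu i • f i := LinearEquiv.coe_ofIsUnitDet hdet
    have hb : Function.Bijective
        ⇑((LinearEquiv.ofIsUnitDet hdet : M₁ →ₗ[PowerSeries F] M₂)) :=
      (LinearEquiv.ofIsUnitDet hdet).bijective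
    rw [he, LinearMap.coe_sum] at hb
    exact hb
end
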